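/- arXiv:2512.10387 — 2 statements merged into one kernel-verified Lean document; each statement's English description precedes it below -/
import Mathlib

section
/- Let α_u denote the interior angle at the vertex corresponding to u in the Euclidean triangle with side lengths l_uv, l_vw, l_uw defined from radii r_u, r_v, r_w > 0 and overlap angles in [0, π/2] via l_uv = sqrt(r_u² + r_v² + 2 r_u r_v cos Θ_uv). Then, keeping r_v, r_w fixed, α_u is a strictly decreasing function of r_u. -/
/-!
With `a = l_uv`, `b = l_uw` and `c = l_vw`, the law of cosines gives
`cos α_u = (a² + b² - c²) / (2ab)`, where only `a` and `b` depend on `r = r_u`, with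
`a a' = r + p` and `b b' = r + q` for `p = r_v cos Θ_uv`, `q = r_w cos Θ_uw`. The derivative
of `cos α_u` in `r` therefore has the sign of
`(r + p) b² (a² - b² + c²) + (r + q) a² (b² - a² + c²)`.
Overlap angles in `[0, π/2]` give `0 ≤ p ≤ r_v`, `0 ≤ q ≤ r_w` and `c² ≥ r_v² + r_w²`, and
then this polynomial regroups into a sum of nonnegative terms, one of them `2 r r_v² r_w² > 0`. So
`cos α_u` increases strictly with `r`, and `α_u` decreases since `arccos` is decreasing.
-/

/-- Edge length of a pair of overlapping circles with radii `ru, rv` and overlap angle `Θ`. -/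
noncomputable def elen (ru rv Θ : ℝ) : ℝ :=
  Real.sqrt (ru ^ 2 + rv ^ 2 + 2 * ru * rv * Real.cos Θ)

/-- Angle at the vertex `u` of the triangle of centers, by the law of cosines. -/
noncomputable def alphaU (ru rv rw Θuv Θvw Θuw : ℝ) : ℝ :=
  Real.arccos (((elen ru rv Θuv) ^ 2 + (elen ru rw Θuw) ^ 2 - (elen rv rw Θvw) ^ 2) /
    (2 * elen ru rv Θuv * elen ru rw Θuw))

open Real Set

noncomputable def triangleCos (a b c : ℝ) : ℝ :=
  (a ^ 2 + b ^ 2 - c ^ 2) / (2 * a * b)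

lemma triangleCos_mem_Icc {a b c : ℝ} (ha : 0 < a) (hb : 0 < b)
    (hlow : (a - b) ^ 2 ≤ c ^ 2) (hup : c ^ 2 ≤ (a + b) ^ 2) :
    triangleCos a b c ∈ Icc (-1) 1 := by
  have hab : 0 < 2 * a * b := by positivity
  constructor
  · rw [triangleCos, le_div_iff₀ hab]; nlinarith
  · rw [triangleCos, div_le_one hab]; nlinarith

lemma hasDerivAt_triangleCos {a b : ℝ → ℝ} {a' b' x : ℝ} (c : ℝ)
    (ha : HasDerivAt a a' x) (hb : HasDerivAt b b' x) (ha₀ : a x ≠ 0) (hb₀ : b x ≠ 0) :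
    HasDerivAt (fun t => triangleCos (a t) (b t) c)
      ((a' * b x * (a x ^ 2 - b x ^ 2 + c ^ 2) + a x * b' * (b x ^ 2 - a x ^ 2 + c ^ 2)) /
        (2 * a x ^ 2 * b x ^ 2)) x := by
  have hnum : HasDerivAt (fun t => a t ^ 2 + b t ^ 2 - c ^ 2) (2 * a x * a' + 2 * b x * b') x :=
    (((ha.pow 2).add (hb.pow 2)).sub_const (c ^ 2)).congr_deriv (by push_cast; ring)
  have hden : HasDerivAt (fun t => 2 * a t * b t) (2 * a' * b x + 2 * a x * b') x :=
    (ha.const_mul 2).mul hb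
  refine (hnum.div hden (by positivity)).congr_deriv ?_
  field_simp
  ring

lemma elen_sq (r s Θ : ℝ) : elen r s Θ ^ 2 = r ^ 2 + s ^ 2 + 2 * r * s * cos Θ := by
  refine sq_sqrt ?_
  nlinarith [sq_nonneg (r + s * cos Θ), sq_nonneg (s * sin Θ), sin_sq_add_cos_sq Θ]

lemma elen_pos {r s Θ : ℝ} (hr : 0 < r) (hs : 0 ≤ s) (hΘ : 0 ≤ cos Θ) : 0 < elen r s Θ :=
  sqrt_pos.2 (by positivity)

lemma hasDerivAt_elen {s Θ x : ℝ} (hx : elen x s Θ ≠ 0) :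
    HasDerivAt (fun t => elen t s Θ) ((x + s * cos Θ) / elen x s Θ) x := by
  have hrad : x ^ 2 + s ^ 2 + 2 * x * s * cos Θ ≠ 0 := fun h => hx (by rw [elen, h, sqrt_zero])
  have hpoly : HasDerivAt (fun t => t ^ 2 + s ^ 2 + 2 * t * s * cos Θ)
      (2 * x + 2 * s * cos Θ) x := by
    refine (((hasDerivAt_pow 2 x).add_const (s ^ 2)).add
      ((((hasDerivAt_id x).const_mul 2).mul_const s).mul_const (cos Θ))).congr_deriv ?_
    simp
  refine (hpoly.sqrt hrad).congr_deriv ?_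
  unfold elen
  field_simp

lemma angle_deriv_numerator_pos {x rv rw p q A B D : ℝ} (hx : 0 < x) (hrv : 0 < rv)
    (hrw : 0 < rw) (hp : 0 ≤ p) (hp' : p ≤ rv) (hq : 0 ≤ q) (hq' : q ≤ rw)
    (hA : A = x ^ 2 + rv ^ 2 + 2 * x * p) (hB : B = x ^ 2 + rw ^ 2 + 2 * x * q)
    (hD : rv ^ 2 + rw ^ 2 ≤ D) :
    0 < (x + p) * B * (A - B + D) + (x + q) * A * (B - A + D) := by
  obtain ⟨δ, hδ, rfl⟩ : ∃ δ ≥ 0, D = rv ^ 2 + rw ^ 2 + δ :=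
    ⟨D - rv ^ 2 - rw ^ 2, by linarith, by ring⟩
  subst hA hB
  have hδ_term : 0 ≤ δ * ((x + p) * (x ^ 2 + rw ^ 2 + 2 * x * q) +
      (x + q) * (x ^ 2 + rv ^ 2 + 2 * x * p)) := by positivity
  have hcubic : 0 ≤ x ^ 3 * (rv ^ 2 - p ^ 2 + (rw ^ 2 - q ^ 2) + 2 * p * q) :=
    mul_nonneg (by positivity) (by nlinarith)
  have hquadratic : 0 ≤ 3 * x ^ 2 * (rv ^ 2 * q + rw ^ 2 * p) := by positivity
  have hlinear : 0 < x * (2 * rv ^ 2 * rw ^ 2 + p * q * (rv ^ 2 + rw ^ 2) +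
      p ^ 2 * rw ^ 2 + q ^ 2 * rv ^ 2) := by positivity
  have hconst : 0 ≤ rv ^ 2 * rw ^ 2 * (p + q) := by positivity
  linear_combination hδ_term + 2 * hcubic + 2 * hquadratic + 2 * hlinear + 2 * hconst

lemma triangleCos_elen_mem_Icc {t rv rw Θuv Θvw Θuw : ℝ} (ht : 0 < t) (hrv : 0 < rv)
    (hrw : 0 < rw) (huv : 0 ≤ cos Θuv) (hvw : 0 ≤ cos Θvw) (huw : 0 ≤ cos Θuw) :
    triangleCos (elen t rv Θuv) (elen t rw Θuw) (elen rv rw Θvw) ∈ Icc (-1) 1 := by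
  set a := elen t rv Θuv
  set b := elen t rw Θuw
  set c := elen rv rw Θvw
  have ha : 0 < a := elen_pos ht hrv.le huv
  have hb : 0 < b := elen_pos ht hrw.le huw
  have ha2 : a ^ 2 = t ^ 2 + rv ^ 2 + 2 * t * rv * cos Θuv := elen_sq t rv Θuv
  have hb2 : b ^ 2 = t ^ 2 + rw ^ 2 + 2 * t * rw * cos Θuw := elen_sq t rw Θuw
  have hc2 : c ^ 2 = rv ^ 2 + rw ^ 2 + 2 * rv * rw * cos Θvw := elen_sq rv rw Θvw
  have hrv_le : rv ≤ a := le_sqrt_of_sq_le <| by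
    nlinarith [mul_nonneg (mul_nonneg ht.le hrv.le) huv]
  have hrw_le : rw ≤ b := le_sqrt_of_sq_le <| by
    nlinarith [mul_nonneg (mul_nonneg ht.le hrw.le) huw]
  have hpa : t + rv * cos Θuv ≤ a := le_sqrt_of_sq_le <| by
    nlinarith [mul_nonneg (sq_nonneg rv) (sub_nonneg.2 (cos_sq_le_one Θuv))]
  have hqb : t + rw * cos Θuw ≤ b := le_sqrt_of_sq_le <| by
    nlinarith [mul_nonneg (sq_nonneg rw) (sub_nonneg.2 (cos_sq_le_one Θuw))]
  refine triangleCos_mem_Icc ha hb ?_ ?_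
  · have hab : (t + rv * cos Θuv) * (t + rw * cos Θuw) ≤ a * b :=
      mul_le_mul hpa hqb (by positivity) ha.le
    nlinarith [mul_nonneg (mul_nonneg hrv.le hrw.le) (mul_nonneg huv huw),
      mul_nonneg (mul_nonneg hrv.le hrw.le) hvw]
  · calc c ^ 2 ≤ (rv + rw) ^ 2 := by
          rw [hc2]
          nlinarith [mul_nonneg (mul_nonneg hrv.le hrw.le) (sub_nonneg.2 (cos_le_one Θvw))]
      _ ≤ (a + b) ^ 2 := by gcongr

lemma strictMonoOn_triangleCos_elen {rv rw Θuv Θvw Θuw : ℝ} (hrv : 0 < rv) (hrw : 0 < rw)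
    (huv : 0 ≤ cos Θuv) (hvw : 0 ≤ cos Θvw) (huw : 0 ≤ cos Θuw) :
    StrictMonoOn (fun t => triangleCos (elen t rv Θuv) (elen t rw Θuw) (elen rv rw Θvw))
      (Ioi 0) := by
  have hderiv : ∀ x ∈ Ioi (0 : ℝ), ∃ d > 0, HasDerivAt
      (fun t => triangleCos (elen t rv Θuv) (elen t rw Θuw) (elen rv rw Θvw)) d x := by
    intro x hx
    set a := elen x rv Θuv
    set b := elen x rw Θuw
    set c := elen rv rw Θvw
    have ha : 0 < a := elen_pos hx hrv.le huv
    have hb : 0 < b := elen_pos hx hrw.le huw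
    refine ⟨_, ?_, hasDerivAt_triangleCos c (hasDerivAt_elen ha.ne') (hasDerivAt_elen hb.ne')
      ha.ne' hb.ne'⟩
    have hnum : (x + rv * cos Θuv) / a * b * (a ^ 2 - b ^ 2 + c ^ 2) +
          a * ((x + rw * cos Θuw) / b) * (b ^ 2 - a ^ 2 + c ^ 2) =
        ((x + rv * cos Θuv) * b ^ 2 * (a ^ 2 - b ^ 2 + c ^ 2) +
          (x + rw * cos Θuw) * a ^ 2 * (b ^ 2 - a ^ 2 + c ^ 2)) / (a * b) := by
      field_simp
    rw [hnum]
    refine div_pos (div_pos ?_ (by positivity)) (by positivity)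
    refine angle_deriv_numerator_pos hx hrv hrw (mul_nonneg hrv.le huv)
      (mul_le_of_le_one_right hrv.le (cos_le_one _)) (mul_nonneg hrw.le huw)
      (mul_le_of_le_one_right hrw.le (cos_le_one _)) (by rw [elen_sq]; ring)
      (by rw [elen_sq]; ring) ?_
    rw [elen_sq]
    exact le_add_of_nonneg_right (mul_nonneg (by positivity) hvw)
  refine strictMonoOn_of_deriv_pos (convex_Ioi 0)
    (fun x hx => (hderiv x hx).choose_spec.2.continuousAt.continuousWithinAt) ?_
  rw [interior_Ioi]
  intro x hx
  obtain ⟨d, hd, hf⟩ := hderiv x hx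
  rwa [hf.deriv]

theorem stmt_10 (rv rw Θuv Θvw Θuw : ℝ) (hrv : 0 < rv) (hrw : 0 < rw)
    (huv : Θuv ∈ Set.Icc 0 (Real.pi / 2)) (hvw : Θvw ∈ Set.Icc 0 (Real.pi / 2))
    (huw : Θuw ∈ Set.Icc 0 (Real.pi / 2)) :
    StrictAntiOn (fun ru => alphaU ru rv rw Θuv Θvw Θuw) (Set.Ioi 0) := by
  have hcos {Θ : ℝ} (hΘ : Θ ∈ Icc 0 (π / 2)) : 0 ≤ cos Θ :=
    cos_nonneg_of_mem_Icc ⟨by linarith [hΘ.1, pi_pos], hΘ.2⟩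
  exact strictAntiOn_arccos.comp_strictMonoOn
    (strictMonoOn_triangleCos_elen hrv hrw (hcos huv) (hcos hvw) (hcos huw))
    fun t ht => triangleCos_elen_mem_Icc ht hrv hrw (hcos huv) (hcos hvw) (hcos huw)
end

section
/- Let A_uvw be the area of the Euclidean triangle with side lengths l_uv, l_vw, l_uw arising from radii r_u, r_v, r_w > 0 and overlap angles in [0, π/2]. Then by Heron's formula 16 A_uvw² = 2 l_uv² l_vw² + 2 l_vw² l_uw² + 2 l_uw² l_uv² − l_uv⁴ − l_vw⁴ − l_uw⁴, and this quantity is strictly positive. -/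
lemma elen_comm (ru rv Θ : ℝ) : elen ru rv Θ = elen rv ru Θ := by
  unfold elen; ring_nf

lemma lt_elen_left {ru rv Θ : ℝ} (hru : 0 ≤ ru) (hrv : 0 < rv) (hΘ : 0 ≤ Real.cos Θ) :
    ru < elen ru rv Θ :=
  (Real.lt_sqrt hru).mpr (by nlinarith [mul_nonneg (mul_nonneg hru hrv.le) hΘ])

lemma lt_elen_right {ru rv Θ : ℝ} (hru : 0 < ru) (hrv : 0 ≤ rv) (hΘ : 0 ≤ Real.cos Θ) :
    rv < elen ru rv Θ :=
  elen_comm ru rv Θ ▸ lt_elen_left hrv hru hΘ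

lemma elen_le_add {ru rv : ℝ} (hru : 0 ≤ ru) (hrv : 0 ≤ rv) (Θ : ℝ) :
    elen ru rv Θ ≤ ru + rv := by
  refine Real.sqrt_le_iff.mpr ⟨by positivity, ?_⟩
  nlinarith [mul_nonneg (mul_nonneg hru hrv) (sub_nonneg.mpr (Real.cos_le_one Θ))]

lemma heron_eq_mul (a b c : ℝ) :
    2 * a ^ 2 * b ^ 2 + 2 * b ^ 2 * c ^ 2 + 2 * c ^ 2 * a ^ 2 - a ^ 4 - b ^ 4 - c ^ 4
      = (a + b + c) * (-a + b + c) * (a - b + c) * (a + b - c) := by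
  ring

lemma heron_pos {a b c : ℝ} (hab : c < a + b) (hbc : a < b + c) (hca : b < c + a) :
    0 < 2 * a ^ 2 * b ^ 2 + 2 * b ^ 2 * c ^ 2 + 2 * c ^ 2 * a ^ 2 - a ^ 4 - b ^ 4 - c ^ 4 := by
  rw [heron_eq_mul]
  have hsum : 0 < a + b + c := by linarith
  exact mul_pos (mul_pos (mul_pos hsum (by linarith)) (by linarith)) (by linarith)

theorem stmt_16 (ru rv rw Θuv Θvw Θuw : ℝ)
    (hru : 0 < ru) (hrv : 0 < rv) (hrw : 0 < rw)
    (huv : Θuv ∈ Set.Icc 0 (Real.pi / 2)) (hvw : Θvw ∈ Set.Icc 0 (Real.pi / 2))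
    (huw : Θuw ∈ Set.Icc 0 (Real.pi / 2)) :
    let Q : ℝ := 2 * (elen ru rv Θuv) ^ 2 * (elen rv rw Θvw) ^ 2
        + 2 * (elen rv rw Θvw) ^ 2 * (elen ru rw Θuw) ^ 2
        + 2 * (elen ru rw Θuw) ^ 2 * (elen ru rv Θuv) ^ 2
        - (elen ru rv Θuv) ^ 4 - (elen rv rw Θvw) ^ 4 - (elen ru rw Θuw) ^ 4
    let A : ℝ := Real.sqrt Q / 4
    16 * A ^ 2 = Q ∧ 0 < Q := by
  intro Q A
  have cos_nonneg {Θ : ℝ} (h : Θ ∈ Set.Icc 0 (Real.pi / 2)) : 0 ≤ Real.cos Θ :=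
    Real.cos_nonneg_of_neg_pi_div_two_le_of_le (by linarith [Real.pi_pos, h.1]) h.2
  have := lt_elen_left hru.le hrv (cos_nonneg huv)
  have := lt_elen_right hru hrv.le (cos_nonneg huv)
  have := lt_elen_left hrv.le hrw (cos_nonneg hvw)
  have := lt_elen_right hrv hrw.le (cos_nonneg hvw)
  have := lt_elen_left hru.le hrw (cos_nonneg huw)
  have := lt_elen_right hru hrw.le (cos_nonneg huw)
  have := elen_le_add hru.le hrv.le Θuv
  have := elen_le_add hrv.le hrw.le Θvw
  have := elen_le_add hru.le hrw.le Θuw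
  have hQ : 0 < Q := heron_pos (by linarith) (by linarith) (by linarith)
  refine ⟨?_, hQ⟩
  rw [div_pow, Real.sq_sqrt hQ.le]
  ring
end
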